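/- Let 𝒟 be neighborhood closed and let Φ be a continuous periodic cocycle with period T > 0 on X (i.e. Φ(t, θ_{1,T}ω₁, ω₂, ·) = Φ(t, ω₁, ω₂, ·) for all t ≥ 0, ω₁, ω₂). Suppose Φ has a 𝒟-pullback attractor A ∈ 𝒟. Then A is periodic with period T (i.e. A(θ_{1,T}ω₁, ω₂) = A(ω₁, ω₂) for all ω₁ ∈ Ω₁, ω₂ ∈ Ω₂) if and only if Φ has a closed measurable (with respect to the P-completion of F₂) 𝒟-pullback absorbing set K ∈ 𝒟 with K periodic with period T (i.e. K(θ_{1,T}ω₁, ω₂) = K(ω₁, ω₂) for all ω₁, ω₂). -/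

import Mathlib

/-!
If `A` is `T`-periodic, a closed `ε/2`-neighbourhood of `A` is a `T`-periodic absorbing set: it
belongs to `𝒟` because `𝒟` is neighbourhood closed, and its distance functions are infima over a
dense sequence of `X`, hence measurable. Conversely, invariance of `A` together with absorption by
`K` gives `A(ω) ⊆ Φ(t, θ₋ₜω, K(θ₋ₜω))` for every `t ≥ 0`. When `Φ` and `K` are `T`-periodic, so
are these pullback images, and `A` attracts them; hence `A(θ_{1,T}ω₁, ω₂)` and `A(ω₁, ω₂)` lie in
each other's closure, that is, in each other.
-/

open Set Metric MeasureTheory Filter Topology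

section RDS

variable {X : Type*} [MetricSpace X] [MeasurableSpace X] [BorelSpace X]
variable {Ω₁ : Type*} {Ω₂ : Type*} [MeasurableSpace Ω₂]

/-- `(Ω₁, θ₁)` is a parametric dynamical system. -/
def IsParamDS₁ (θ₁ : ℝ → Ω₁ → Ω₁) : Prop :=
  θ₁ 0 = id ∧ ∀ s t : ℝ, θ₁ (s + t) = θ₁ t ∘ θ₁ s

/-- `(Ω₂, F₂, P, θ₂)` is a measure-preserving parametric dynamical system. -/
def IsParamDS₂ (P : Measure Ω₂) (θ₂ : ℝ → Ω₂ → Ω₂) : Prop :=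
  Measurable (fun p : ℝ × Ω₂ => θ₂ p.1 p.2) ∧ θ₂ 0 = id ∧
    (∀ s t : ℝ, θ₂ (s + t) = θ₂ t ∘ θ₂ s) ∧ ∀ t : ℝ, MeasurePreserving (θ₂ t) P P

/-- `Φ` is a continuous cocycle on `X` over the two parametric dynamical systems. -/
def IsCocycle (θ₁ : ℝ → Ω₁ → Ω₁) (θ₂ : ℝ → Ω₂ → Ω₂)
    (Φ : ℝ → Ω₁ → Ω₂ → X → X) : Prop :=
  (∀ ω₁ : Ω₁, Measurable fun p : Ici (0:ℝ) × Ω₂ × X => Φ (p.1 : ℝ) ω₁ p.2.1 p.2.2) ∧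
  (∀ ω₁ ω₂, Φ 0 ω₁ ω₂ = id) ∧
  (∀ t τ : ℝ, 0 ≤ t → 0 ≤ τ → ∀ ω₁ ω₂,
      Φ (t + τ) ω₁ ω₂ = (Φ t (θ₁ τ ω₁) (θ₂ τ ω₂)) ∘ (Φ τ ω₁ ω₂)) ∧
  (∀ t : ℝ, 0 ≤ t → ∀ ω₁ ω₂, Continuous (Φ t ω₁ ω₂))

/-- The pullback image `Φ(t, θ₁(-t)ω₁, θ₂(-t)ω₂, B(θ₁(-t)ω₁, θ₂(-t)ω₂))`. -/
def pbImage (θ₁ : ℝ → Ω₁ → Ω₁) (θ₂ : ℝ → Ω₂ → Ω₂) (Φ : ℝ → Ω₁ → Ω₂ → X → X)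
    (B : Ω₁ → Ω₂ → Set X) (t : ℝ) (ω₁ : Ω₁) (ω₂ : Ω₂) : Set X :=
  Φ t (θ₁ (-t) ω₁) (θ₂ (-t) ω₂) '' B (θ₁ (-t) ω₁) (θ₂ (-t) ω₂)

/-- The collection `𝒟` is neighborhood closed. -/
def NbhdClosed (𝒟 : Set (Ω₁ → Ω₂ → Set X)) : Prop :=
  ∀ D ∈ 𝒟, ∃ ε > (0:ℝ), ∀ B : Ω₁ → Ω₂ → Set X,
    (∀ ω₁ ω₂, (B ω₁ ω₂).Nonempty ∧ B ω₁ ω₂ ⊆ thickening ε (D ω₁ ω₂)) → B ∈ 𝒟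

/-- `K` is a `𝒟`-pullback absorbing set for `Φ`. -/
def AbsorbsFam (θ₁ : ℝ → Ω₁ → Ω₁) (θ₂ : ℝ → Ω₂ → Ω₂) (Φ : ℝ → Ω₁ → Ω₂ → X → X)
    (𝒟 : Set (Ω₁ → Ω₂ → Set X)) (K : Ω₁ → Ω₂ → Set X) : Prop :=
  ∀ ω₁ ω₂, ∀ B ∈ 𝒟, ∃ T > (0:ℝ), ∀ t ≥ T, pbImage θ₁ θ₂ Φ B t ω₁ ω₂ ⊆ K ω₁ ω₂

/-- `K` is measurable with respect to the `P`-completion of the σ-algebra of `Ω₂`. -/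
def MeasurableFam (P : Measure Ω₂) (K : Ω₁ → Ω₂ → Set X) : Prop :=
  ∀ (x : X) (ω₁ : Ω₁), NullMeasurable (fun ω₂ => infDist x (K ω₁ ω₂)) P

/-- `Φ` is `𝒟`-pullback asymptotically compact in `X`. -/
def AsympCompact (θ₁ : ℝ → Ω₁ → Ω₁) (θ₂ : ℝ → Ω₂ → Ω₂) (Φ : ℝ → Ω₁ → Ω₂ → X → X)
    (𝒟 : Set (Ω₁ → Ω₂ → Set X)) : Prop :=
  ∀ ω₁ ω₂, ∀ B ∈ 𝒟, ∀ (t : ℕ → ℝ) (x : ℕ → X),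
    Tendsto t atTop atTop →
    (∀ n, x n ∈ B (θ₁ (-(t n)) ω₁) (θ₂ (-(t n)) ω₂)) →
    ∃ (φ : ℕ → ℕ) (y : X), StrictMono φ ∧
      Tendsto (fun n => Φ (t (φ n)) (θ₁ (-(t (φ n))) ω₁) (θ₂ (-(t (φ n))) ω₂) (x (φ n)))
        atTop (𝓝 y)

/-- `A` pullback attracts every member of `𝒟` (Hausdorff semidistance goes to `0`). -/
def AttractsFam (θ₁ : ℝ → Ω₁ → Ω₁) (θ₂ : ℝ → Ω₂ → Ω₂) (Φ : ℝ → Ω₁ → Ω₂ → X → X)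
    (𝒟 : Set (Ω₁ → Ω₂ → Set X)) (A : Ω₁ → Ω₂ → Set X) : Prop :=
  ∀ ω₁ ω₂, ∀ B ∈ 𝒟, ∀ ε > (0:ℝ), ∃ T : ℝ, ∀ t ≥ T,
    pbImage θ₁ θ₂ Φ B t ω₁ ω₂ ⊆ thickening ε (A ω₁ ω₂)

/-- `A` is a `𝒟`-pullback attractor for `Φ`. -/
def IsPullbackAttractor (P : Measure Ω₂) (θ₁ : ℝ → Ω₁ → Ω₁) (θ₂ : ℝ → Ω₂ → Ω₂)
    (Φ : ℝ → Ω₁ → Ω₂ → X → X) (𝒟 : Set (Ω₁ → Ω₂ → Set X)) (A : Ω₁ → Ω₂ → Set X) : Prop :=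
  A ∈ 𝒟 ∧ MeasurableFam P A ∧
  (∀ ω₁ ω₂, IsCompact (A ω₁ ω₂)) ∧
  (∀ t : ℝ, 0 ≤ t → ∀ ω₁ ω₂, Φ t ω₁ ω₂ '' A ω₁ ω₂ = A (θ₁ t ω₁) (θ₂ t ω₂)) ∧
  AttractsFam θ₁ θ₂ Φ 𝒟 A

/-- The Ω-limit set of a family `B`. -/
def omegaLimitFam (θ₁ : ℝ → Ω₁ → Ω₁) (θ₂ : ℝ → Ω₂ → Ω₂) (Φ : ℝ → Ω₁ → Ω₂ → X → X)
    (B : Ω₁ → Ω₂ → Set X) (ω₁ : Ω₁) (ω₂ : Ω₂) : Set X :=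
  ⋂ τ ∈ Ici (0:ℝ), closure (⋃ t ∈ Ici τ, pbImage θ₁ θ₂ Φ B t ω₁ ω₂)

end RDS

theorem infEDist_eq_iInf_of_denseRange_of_isOpen {Y ι : Type*} [PseudoEMetricSpace Y]
    {q : ι → Y} (hq : DenseRange q) {U : Set Y} (hU : IsOpen U) (x : Y) :
    infEDist x U = ⨅ (i) (_ : q i ∈ U), edist x (q i) := by
  refine le_antisymm (le_iInf₂ fun i hi => infEDist_le_edist_of_mem hi) ?_
  calc ⨅ (i) (_ : q i ∈ U), edist x (q i)
      ≤ infEDist x (U ∩ range q) := by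
        rw [le_infEDist]
        rintro _ ⟨hiU, i, rfl⟩
        exact iInf₂_le i hiU
    _ = infEDist x (closure (U ∩ range q)) := infEDist_closure.symm
    _ ≤ infEDist x U := infEDist_anti (hq.open_subset_closure_inter hU)

theorem nullMeasurable_infDist_closure_thickening {X : Type*} [MetricSpace X]
    [TopologicalSpace.SeparableSpace X]
    {Ω : Type*} [MeasurableSpace Ω] {P : Measure Ω} {K : Ω → Set X}
    (hK : ∀ y, NullMeasurable (fun ω => infDist y (K ω)) P) (hne : ∀ ω, (K ω).Nonempty)
    (δ : ℝ) (x : X) :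
    NullMeasurable (fun ω => infDist x (closure (thickening δ (K ω)))) P := by
  have : Nonempty X := ⟨x⟩
  obtain ⟨q, hq⟩ := TopologicalSpace.exists_dense_seq X
  have hdist : (fun ω => infDist x (closure (thickening δ (K ω)))) = fun ω =>
      (⨅ n, if infDist (q n) (K ω) < δ then edist x (q n) else ⊤).toReal := by
    funext ω
    rw [infDist_closure, infDist, infEDist_eq_iInf_of_denseRange_of_isOpen hq isOpen_thickening]
    -- `hne` matters here: `thickening δ ∅ = ∅`, yet `infDist y ∅ = 0 < δ`.
    simp_rw [mem_thickening_iff_infDist_lt (hne ω), iInf_eq_if]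
  rw [hdist]
  refine ENNReal.measurable_toReal.comp (Measurable.iInf fun n => ?_)
  exact Measurable.ite ((hK (q n)).measurable' measurableSet_Iio) measurable_const
    measurable_const

section Flow

variable {Ω₁ Ω₂ : Type*} [MeasurableSpace Ω₂] {θ₁ : ℝ → Ω₁ → Ω₁} {θ₂ : ℝ → Ω₂ → Ω₂}
  {P : Measure Ω₂}

theorem IsParamDS₁.apply_apply (h : IsParamDS₁ θ₁) (s t : ℝ) (ω : Ω₁) :
    θ₁ t (θ₁ s ω) = θ₁ (s + t) ω :=
  (congrFun (h.2 s t) ω).symm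

theorem IsParamDS₂.apply_apply (h : IsParamDS₂ P θ₂) (s t : ℝ) (ω : Ω₂) :
    θ₂ t (θ₂ s ω) = θ₂ (s + t) ω :=
  (congrFun (h.2.2.1 s t) ω).symm

theorem IsParamDS₁.apply_neg_apply (h : IsParamDS₁ θ₁) (t : ℝ) (ω : Ω₁) :
    θ₁ t (θ₁ (-t) ω) = ω := by
  rw [h.apply_apply, neg_add_cancel, h.1, id]

theorem IsParamDS₂.apply_neg_apply (h : IsParamDS₂ P θ₂) (t : ℝ) (ω : Ω₂) :
    θ₂ t (θ₂ (-t) ω) = ω := by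
  rw [h.apply_apply, neg_add_cancel, h.2.1, id]

end Flow

section Pullback

variable {X Ω₁ Ω₂ : Type*} {θ₁ : ℝ → Ω₁ → Ω₁} {θ₂ : ℝ → Ω₂ → Ω₂} {Φ : ℝ → Ω₁ → Ω₂ → X → X}
  {𝒟 : Set (Ω₁ → Ω₂ → Set X)} {A K : Ω₁ → Ω₂ → Set X}

theorem pbImage_add [MetricSpace X] [MeasurableSpace X] [MeasurableSpace Ω₂] {P : Measure Ω₂}
    (hθ₁ : IsParamDS₁ θ₁) (hθ₂ : IsParamDS₂ P θ₂) (hΦ : IsCocycle θ₁ θ₂ Φ)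
    (B : Ω₁ → Ω₂ → Set X) {t s : ℝ} (ht : 0 ≤ t) (hs : 0 ≤ s) (ω₁ : Ω₁) (ω₂ : Ω₂) :
    pbImage θ₁ θ₂ Φ B (t + s) ω₁ ω₂ =
      Φ t (θ₁ (-t) ω₁) (θ₂ (-t) ω₂) '' pbImage θ₁ θ₂ Φ B s (θ₁ (-t) ω₁) (θ₂ (-t) ω₂) := by
  have hshift : -t + -s = -(t + s) := by ring
  have hback : -(t + s) + s = -t := by ring
  rw [pbImage, pbImage, hΦ.2.2.1 t s ht hs, image_comp, hθ₁.apply_apply, hθ₂.apply_apply,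
    hθ₁.apply_apply, hθ₂.apply_apply, hshift, hback]

theorem pbImage_eq_of_invariant [MeasurableSpace Ω₂] {P : Measure Ω₂} (hθ₁ : IsParamDS₁ θ₁)
    (hθ₂ : IsParamDS₂ P θ₂)
    (hinv : ∀ t : ℝ, 0 ≤ t → ∀ ω₁ ω₂, Φ t ω₁ ω₂ '' A ω₁ ω₂ = A (θ₁ t ω₁) (θ₂ t ω₂))
    {t : ℝ} (ht : 0 ≤ t) (ω₁ : Ω₁) (ω₂ : Ω₂) :
    pbImage θ₁ θ₂ Φ A t ω₁ ω₂ = A ω₁ ω₂ := by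
  rw [pbImage, hinv t ht, hθ₁.apply_neg_apply, hθ₂.apply_neg_apply]

theorem subset_pbImage_of_absorbsFam [MetricSpace X] [MeasurableSpace X] [MeasurableSpace Ω₂]
    {P : Measure Ω₂} (hθ₁ : IsParamDS₁ θ₁) (hθ₂ : IsParamDS₂ P θ₂)
    (hΦ : IsCocycle θ₁ θ₂ Φ)
    (hinv : ∀ t : ℝ, 0 ≤ t → ∀ ω₁ ω₂, Φ t ω₁ ω₂ '' A ω₁ ω₂ = A (θ₁ t ω₁) (θ₂ t ω₂))
    (hA : A ∈ 𝒟) (hK : AbsorbsFam θ₁ θ₂ Φ 𝒟 K) {t : ℝ} (ht : 0 ≤ t) (ω₁ : Ω₁) (ω₂ : Ω₂) :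
    A ω₁ ω₂ ⊆ pbImage θ₁ θ₂ Φ K t ω₁ ω₂ := by
  obtain ⟨s, hs, habs⟩ := hK (θ₁ (-t) ω₁) (θ₂ (-t) ω₂) A hA
  calc A ω₁ ω₂ = pbImage θ₁ θ₂ Φ A (t + s) ω₁ ω₂ :=
        (pbImage_eq_of_invariant hθ₁ hθ₂ hinv (by positivity) ω₁ ω₂).symm
    _ = Φ t (θ₁ (-t) ω₁) (θ₂ (-t) ω₂) '' pbImage θ₁ θ₂ Φ A s (θ₁ (-t) ω₁) (θ₂ (-t) ω₂) :=
        pbImage_add hθ₁ hθ₂ hΦ A ht hs.le ω₁ ω₂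
    _ ⊆ pbImage θ₁ θ₂ Φ K t ω₁ ω₂ := image_mono (habs s le_rfl)

theorem pbImage_apply_period (hθ₁ : IsParamDS₁ θ₁) {T : ℝ}
    (hper : ∀ t : ℝ, 0 ≤ t → ∀ ω₁ ω₂, Φ t (θ₁ T ω₁) ω₂ = Φ t ω₁ ω₂)
    (hK : ∀ ω₁ ω₂, K (θ₁ T ω₁) ω₂ = K ω₁ ω₂) {t : ℝ} (ht : 0 ≤ t) (ω₁ : Ω₁) (ω₂ : Ω₂) :
    pbImage θ₁ θ₂ Φ K t (θ₁ T ω₁) ω₂ = pbImage θ₁ θ₂ Φ K t ω₁ ω₂ := by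
  have hcomm : θ₁ (-t) (θ₁ T ω₁) = θ₁ T (θ₁ (-t) ω₁) := by
    rw [hθ₁.apply_apply, hθ₁.apply_apply, add_comm]
  rw [pbImage, pbImage, hcomm, hper t ht, hK]

theorem AttractsFam.subset_of_eventually_subset_pbImage [MetricSpace X]
    (hA : AttractsFam θ₁ θ₂ Φ 𝒟 A) (hK : K ∈ 𝒟) {ω₁ : Ω₁} {ω₂ : Ω₂}
    (hclosed : IsClosed (A ω₁ ω₂)) {S : Set X}
    (hS : ∀ᶠ t in atTop, S ⊆ pbImage θ₁ θ₂ Φ K t ω₁ ω₂) : S ⊆ A ω₁ ω₂ := by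
  rw [← hclosed.closure_eq, closure_eq_iInter_thickening]
  refine subset_iInter₂ fun ε hε => ?_
  obtain ⟨T, hT⟩ := hA ω₁ ω₂ K hK ε hε
  obtain ⟨t, hSt, hTt⟩ := (hS.and (eventually_ge_atTop T)).exists
  exact hSt.trans (hT t hTt)

theorem AttractsFam.absorbsFam_closure_thickening [MetricSpace X]
    (hA : AttractsFam θ₁ θ₂ Φ 𝒟 A) {δ : ℝ} (hδ : 0 < δ) :
    AbsorbsFam θ₁ θ₂ Φ 𝒟 fun ω₁ ω₂ => closure (thickening δ (A ω₁ ω₂)) := by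
  intro ω₁ ω₂ B hB
  obtain ⟨T, hT⟩ := hA ω₁ ω₂ B hB δ hδ
  exact ⟨max T 1, lt_max_of_lt_right one_pos,
    fun t ht => (hT t (le_of_max_le_left ht)).trans subset_closure⟩

theorem NbhdClosed.exists_closure_thickening_mem [MetricSpace X] (h𝒟 : NbhdClosed 𝒟)
    (hA : A ∈ 𝒟) (hne : ∀ ω₁ ω₂, (A ω₁ ω₂).Nonempty) :
    ∃ δ > (0 : ℝ), (fun ω₁ ω₂ => closure (thickening δ (A ω₁ ω₂))) ∈ 𝒟 := by
  obtain ⟨ε, hε, hε𝒟⟩ := h𝒟 A hA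
  refine ⟨ε / 2, half_pos hε, hε𝒟 _ fun ω₁ ω₂ => ⟨?_, ?_⟩⟩
  · exact (hne ω₁ ω₂).mono ((self_subset_thickening (half_pos hε) _).trans subset_closure)
  · exact (closure_thickening_subset_cthickening _ _).trans
      (cthickening_subset_thickening' hε (half_lt_self hε) _)

theorem IsPullbackAttractor.subset_of_pbImage_subset [MetricSpace X] [MeasurableSpace X]
    [MeasurableSpace Ω₂] {P : Measure Ω₂} (hθ₁ : IsParamDS₁ θ₁) (hθ₂ : IsParamDS₂ P θ₂)
    (hΦ : IsCocycle θ₁ θ₂ Φ) (hA : IsPullbackAttractor P θ₁ θ₂ Φ 𝒟 A)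
    (hK𝒟 : K ∈ 𝒟) (hK : AbsorbsFam θ₁ θ₂ Φ 𝒟 K) {ω₁ ω₁' : Ω₁} {ω₂ ω₂' : Ω₂}
    (h : ∀ t : ℝ, 0 ≤ t → pbImage θ₁ θ₂ Φ K t ω₁' ω₂' ⊆ pbImage θ₁ θ₂ Φ K t ω₁ ω₂) :
    A ω₁' ω₂' ⊆ A ω₁ ω₂ := by
  obtain ⟨hA𝒟, -, hAcpt, hAinv, hAattr⟩ := hA
  refine hAattr.subset_of_eventually_subset_pbImage hK𝒟 (hAcpt ω₁ ω₂).isClosed ?_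
  filter_upwards [eventually_ge_atTop 0] with t ht
  exact (subset_pbImage_of_absorbsFam hθ₁ hθ₂ hΦ hAinv hA𝒟 hK ht ω₁' ω₂').trans (h t ht)

end Pullback

section RDS

variable {X : Type*} [MetricSpace X] [MeasurableSpace X] [BorelSpace X]
variable {Ω₁ : Type*} {Ω₂ : Type*} [MeasurableSpace Ω₂]

theorem periodic_pullback_attractor_iff_general
    [TopologicalSpace.SeparableSpace X]
    (θ₁ : ℝ → Ω₁ → Ω₁) (θ₂ : ℝ → Ω₂ → Ω₂)
    (P : Measure Ω₂)
    (Φ : ℝ → Ω₁ → Ω₂ → X → X)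
    (𝒟 : Set (Ω₁ → Ω₂ → Set X))
    (hθ₁ : IsParamDS₁ θ₁) (hθ₂ : IsParamDS₂ P θ₂)
    (hΦ : IsCocycle θ₁ θ₂ Φ)
    (T : ℝ)
    (hper : ∀ t : ℝ, 0 ≤ t → ∀ ω₁ ω₂, Φ t (θ₁ T ω₁) ω₂ = Φ t ω₁ ω₂)
    (h𝒟ne : ∀ D ∈ 𝒟, ∀ ω₁ ω₂, (D ω₁ ω₂).Nonempty)
    (h𝒟 : NbhdClosed 𝒟)
    (A : Ω₁ → Ω₂ → Set X)
    (hA : IsPullbackAttractor P θ₁ θ₂ Φ 𝒟 A) :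
    (∀ ω₁ ω₂, A (θ₁ T ω₁) ω₂ = A ω₁ ω₂) ↔
      ∃ K : Ω₁ → Ω₂ → Set X, K ∈ 𝒟 ∧
        (∀ ω₁ ω₂, (K ω₁ ω₂).Nonempty ∧ IsClosed (K ω₁ ω₂)) ∧
        MeasurableFam P K ∧
        AbsorbsFam θ₁ θ₂ Φ 𝒟 K ∧
        (∀ ω₁ ω₂, K (θ₁ T ω₁) ω₂ = K ω₁ ω₂) := by
  constructor
  · intro hAper
    have hAne := h𝒟ne A hA.1
    obtain ⟨δ, hδ, hK𝒟⟩ := h𝒟.exists_closure_thickening_mem hA.1 hAne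
    exact ⟨_, hK𝒟, fun ω₁ ω₂ => ⟨h𝒟ne _ hK𝒟 ω₁ ω₂, isClosed_closure⟩,
      fun x ω₁ => nullMeasurable_infDist_closure_thickening (fun y => hA.2.1 y ω₁) (hAne ω₁) δ x,
      hA.2.2.2.2.absorbsFam_closure_thickening hδ, fun ω₁ ω₂ => by simp only [hAper]⟩
  · rintro ⟨K, hK𝒟, -, -, hK, hKper⟩ ω₁ ω₂
    have hpb : ∀ t : ℝ, 0 ≤ t → pbImage θ₁ θ₂ Φ K t (θ₁ T ω₁) ω₂ = pbImage θ₁ θ₂ Φ K t ω₁ ω₂ :=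
      fun t ht => pbImage_apply_period hθ₁ hper hKper ht ω₁ ω₂
    exact (hA.subset_of_pbImage_subset hθ₁ hθ₂ hΦ hK𝒟 hK fun t ht => (hpb t ht).subset).antisymm
      (hA.subset_of_pbImage_subset hθ₁ hθ₂ hΦ hK𝒟 hK fun t ht => (hpb t ht).symm.subset)

/-- Proposition 2.2. Let `𝒟` be neighborhood closed and `Φ` a continuous
periodic cocycle with period `T > 0` possessing a `𝒟`-pullback attractor `A ∈ 𝒟`. Then `A` is
periodic with period `T` if and only if `Φ` has a closed measurable `𝒟`-pullback absorbing set
`K ∈ 𝒟` which is periodic with period `T`. -/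
theorem periodic_pullback_attractor_iff
    [CompleteSpace X] [TopologicalSpace.SeparableSpace X] [Nonempty Ω₁]
    (θ₁ : ℝ → Ω₁ → Ω₁) (θ₂ : ℝ → Ω₂ → Ω₂)
    (P : Measure Ω₂) [IsProbabilityMeasure P]
    (Φ : ℝ → Ω₁ → Ω₂ → X → X)
    (𝒟 : Set (Ω₁ → Ω₂ → Set X))
    (hθ₁ : IsParamDS₁ θ₁) (hθ₂ : IsParamDS₂ P θ₂)
    (hΦ : IsCocycle θ₁ θ₂ Φ)
    (T : ℝ) (hT : 0 < T)
    (hper : ∀ t : ℝ, 0 ≤ t → ∀ ω₁ ω₂, Φ t (θ₁ T ω₁) ω₂ = Φ t ω₁ ω₂)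
    (h𝒟ne : ∀ D ∈ 𝒟, ∀ ω₁ ω₂, (D ω₁ ω₂).Nonempty)
    (h𝒟 : NbhdClosed 𝒟)
    (A : Ω₁ → Ω₂ → Set X)
    (hA : IsPullbackAttractor P θ₁ θ₂ Φ 𝒟 A) :
    (∀ ω₁ ω₂, A (θ₁ T ω₁) ω₂ = A ω₁ ω₂) ↔
      ∃ K : Ω₁ → Ω₂ → Set X, K ∈ 𝒟 ∧
        (∀ ω₁ ω₂, (K ω₁ ω₂).Nonempty ∧ IsClosed (K ω₁ ω₂)) ∧
        MeasurableFam P K ∧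
        AbsorbsFam θ₁ θ₂ Φ 𝒟 K ∧
        (∀ ω₁ ω₂, K (θ₁ T ω₁) ω₂ = K ω₁ ω₂) :=
  periodic_pullback_attractor_iff_general θ₁ θ₂ P Φ 𝒟 hθ₁ hθ₂ hΦ T hper h𝒟ne h𝒟 A hA

end RDS
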